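/- (Main theorem, deterministic core) Let H : {±1}^N → ℝ be even, and suppose there exist σ* ∈ {±1}^N, ρ ∈ (0,1/2), and Δ > 0 such that every σ at Hamming distance exactly ⌊ρN/2⌋ from σ* satisfies H(σ*) - H(σ) ≥ Δ. If βΔ ≥ (log 2 + c)N for some c > 0, then the Glauber dynamics for μ_β(σ) ∝ e^{βH(σ)} has relaxation time at least e^{cN}/2, and hence mixing time at least (e^{cN}/2 − 1)·log 2... in particular t_mix grows exponentially in N. -/

import Mathlib

/-- The Gibbs measure `μ_β(σ) = e^{βH(σ)} / Z`. -/
noncomputable def gibbs {N : ℕ} (β : ℝ) (H : (Fin N → Bool) → ℝ)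
    (σ : Fin N → Bool) : ℝ :=
  Real.exp (β * H σ) / ∑ τ : Fin N → Bool, Real.exp (β * H τ)

/-- Flip the `i`-th spin. -/
def bflip {N : ℕ} (σ : Fin N → Bool) (i : Fin N) : Fin N → Bool :=
  Function.update σ i (!σ i)

/-- Hamming distance on the cube. -/
def hammingDist' {N : ℕ} (σ τ : Fin N → Bool) : ℕ :=
  (Finset.univ.filter (fun i => σ i ≠ τ i)).card

open Classical in
/-- Transition kernel of single-site Glauber dynamics for `μ`. -/
noncomputable def glauberP {N : ℕ} (μ : (Fin N → Bool) → ℝ) :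
    (Fin N → Bool) → (Fin N → Bool) → ℝ := fun σ τ =>
  if σ = τ then 1 - ∑ i : Fin N, (1 / N) * (μ (bflip σ i) / (μ σ + μ (bflip σ i)))
  else if ∃ i, τ = bflip σ i then (1 / N) * (μ τ / (μ σ + μ τ))
  else 0

/-- Dirichlet form. -/
noncomputable def dirichletForm {α : Type*} [Fintype α] (π : α → ℝ)
    (P : α → α → ℝ) (f : α → ℝ) : ℝ :=
  (1/2) * ∑ x, ∑ y, π x * P x y * (f x - f y) ^ 2

/-- Variance under `π`. -/
noncomputable def varPi {α : Type*} [Fintype α] (π : α → ℝ) (f : α → ℝ) : ℝ :=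
  ∑ x, π x * (f x - ∑ y, π y * f y) ^ 2

/-- Spectral gap via the variational characterization. -/
noncomputable def spectralGap {α : Type*} [Fintype α] (π : α → ℝ)
    (P : α → α → ℝ) : ℝ :=
  sInf {r : ℝ | ∃ f : α → ℝ, varPi π f ≠ 0 ∧ r = dirichletForm π P f / varPi π f}

open Classical in
/-- `t`-step transition kernel. -/
noncomputable def kernelPow {α : Type*} [Fintype α] (P : α → α → ℝ) :
    ℕ → α → α → ℝ
  | 0 => fun x y => if x = y then 1 else 0
  | (t + 1) => fun x y => ∑ z, kernelPow P t x z * P z y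

/-- Mixing time: first time total-variation distance from stationarity is `≤ 1/4`
from every initial state. -/
noncomputable def mixingTime {α : Type*} [Fintype α] (π : α → ℝ)
    (P : α → α → ℝ) : ℕ :=
  sInf {t : ℕ | ∀ x, (1/2) * ∑ y, |kernelPow P t x y - π y| ≤ 1/4}

/-!
The centred indicator of the Hamming ball `B` of radius `r = ⌊ρN/2⌋` around `σstar` is a test
function with a tiny Dirichlet-to-variance ratio. Since `H` is even and `2r ≤ N`, the ball and its
antipodal image are disjoint and equally heavy, so `μ_β(B) ≤ 1/2`. The Glauber chain leaves `B`
only through the sphere of radius `r`, whose mass is at most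
`2^N e^{-βΔ} μ_β(σstar) ≤ e^{-cN} μ_β(B)`. Hence `E(1_B) ≤ 2 e^{-cN} Var(1_B)`, which bounds the
spectral gap.

For the mixing time, the spectral theorem applied to the symmetrisation `√π P / √π` turns this
test function into a mean-zero eigenfunction `g` with eigenvalue `l ≥ 1 - ε`, `ε = 2 e^{-cN}`. As
`|P^t g(x)| ≤ 2 d(t) ‖g‖_∞`, total-variation distance `≤ 1/4` at time `t` forces `l^t ≤ 1/2`, i.e.
`t ≥ log 2 · (1 - ε) / ε`. The mixing time is attained because `P^N` has positive entries
(Doeblin's argument).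
-/

open Finset

section MarkovChain

variable {α : Type*} [Fintype α] {π : α → ℝ} {P : α → α → ℝ}

lemma sum_mul_eq_of_reversible (hrow : ∀ x, ∑ y, P x y = 1)
    (hrev : ∀ x y, π x * P x y = π y * P y x) (y : α) : ∑ x, π x * P x y = π y := by
  simp_rw [hrev _ y, ← mul_sum, hrow, mul_one]

lemma sum_kernelPow_eq_one (hrow : ∀ x, ∑ y, P x y = 1) (t : ℕ) (x : α) :
    ∑ y, kernelPow P t x y = 1 := by
  classical
  induction t generalizing x with
  | zero => simp [kernelPow]
  | succ t ih =>
    simp only [kernelPow]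
    rw [sum_comm]
    simp_rw [← mul_sum, hrow, mul_one, ih]

lemma kernelPow_nonneg (hP0 : ∀ x y, 0 ≤ P x y) (t : ℕ) (x y : α) :
    0 ≤ kernelPow P t x y := by
  induction t generalizing y with
  | zero => simp only [kernelPow]; positivity
  | succ t ih => exact sum_nonneg fun z _ => mul_nonneg (ih z) (hP0 z y)

@[simp]
lemma kernelPow_one (x y : α) : kernelPow P 1 x y = P x y := by
  classical
  simp [kernelPow]

lemma kernelPow_add (s t : ℕ) (x y : α) :
    kernelPow P (s + t) x y = ∑ z, kernelPow P s x z * kernelPow P t z y := by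
  classical
  induction t generalizing y with
  | zero => simp [kernelPow]
  | succ t ih =>
    show kernelPow P (s + t + 1) x y = _
    simp only [kernelPow, ih, sum_mul, mul_sum, mul_assoc]
    exact sum_comm

lemma sum_mul_kernelPow (hstat : ∀ y, ∑ x, π x * P x y = π y) (t : ℕ) (y : α) :
    ∑ x, π x * kernelPow P t x y = π y := by
  classical
  induction t generalizing y with
  | zero => simp [kernelPow]
  | succ t ih =>
    simp only [kernelPow, mul_sum, ← mul_assoc]
    rw [sum_comm]
    simp_rw [← sum_mul, ih, hstat]

lemma sum_kernelPow_mul_of_eigen {g : α → ℝ} {l : ℝ} (hg : ∀ x, ∑ y, P x y * g y = l * g x)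
    (t : ℕ) (x : α) : ∑ y, kernelPow P t x y * g y = l ^ t * g x := by
  classical
  induction t generalizing x with
  | zero => simp [kernelPow]
  | succ t ih =>
    simp only [kernelPow, sum_mul, mul_assoc]
    rw [sum_comm]
    simp_rw [← mul_sum, hg, mul_left_comm _ l, ← mul_sum, ih]
    ring

lemma dirichletForm_nonneg (hπ0 : ∀ x, 0 ≤ π x) (hP0 : ∀ x y, 0 ≤ P x y) (f : α → ℝ) :
    0 ≤ dirichletForm π P f :=
  mul_nonneg (by norm_num) <| sum_nonneg fun x _ => sum_nonneg fun y _ =>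
    mul_nonneg (mul_nonneg (hπ0 x) (hP0 x y)) (sq_nonneg _)

lemma dirichletForm_eq (hrow : ∀ x, ∑ y, P x y = 1)
    (hrev : ∀ x y, π x * P x y = π y * P y x) (f : α → ℝ) :
    dirichletForm π P f = ∑ x, π x * f x ^ 2 - ∑ x, ∑ y, π x * P x y * (f x * f y) := by
  have hleft : ∑ x, ∑ y, π x * P x y * f x ^ 2 = ∑ x, π x * f x ^ 2 := by
    simp_rw [← sum_mul, ← mul_sum, hrow, mul_one]
  have hright : ∑ x, ∑ y, π x * P x y * f y ^ 2 = ∑ x, π x * f x ^ 2 := by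
    rw [sum_comm]
    simp_rw [← sum_mul, sum_mul_eq_of_reversible hrow hrev]
  have hexpand : ∀ x y, π x * P x y * (f x - f y) ^ 2 = π x * P x y * f x ^ 2
      + π x * P x y * f y ^ 2 - 2 * (π x * P x y * (f x * f y)) := fun x y => by ring
  simp only [dirichletForm, hexpand, sum_sub_distrib, sum_add_distrib, ← mul_sum, hleft,
    hright]
  ring

lemma dirichletForm_sub_const (f : α → ℝ) (c : ℝ) :
    dirichletForm π P (fun x => f x - c) = dirichletForm π P f := by
  simp only [dirichletForm, sub_sub_sub_cancel_right]

lemma spectralGap_le (hπ0 : ∀ x, 0 ≤ π x) (hP0 : ∀ x y, 0 ≤ P x y) {f : α → ℝ}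
    (hf : varPi π f ≠ 0) : spectralGap π P ≤ dirichletForm π P f / varPi π f := by
  refine csInf_le ⟨0, ?_⟩ ⟨f, hf, rfl⟩
  rintro _ ⟨g, -, rfl⟩
  exact div_nonneg (dirichletForm_nonneg hπ0 hP0 g)
    (sum_nonneg fun x _ => mul_nonneg (hπ0 x) (sq_nonneg _))

end MarkovChain

section Bottleneck

variable {α : Type*} [Fintype α] [DecidableEq α] {π : α → ℝ} {P : α → α → ℝ}

lemma dirichletForm_indicator_le (hπ0 : ∀ x, 0 ≤ π x) (hP0 : ∀ x y, 0 ≤ P x y)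
    (hrow : ∀ x, ∑ y, P x y = 1) (hrev : ∀ x y, π x * P x y = π y * P y x)
    {B S : Finset α} (hS : ∀ x y, P x y ≠ 0 → (x ∈ B ↔ y ∉ B) → x ∈ S ∨ y ∈ S) :
    dirichletForm π P (fun x => if x ∈ B then 1 else 0) ≤ ∑ x ∈ S, π x := by
  set χS : α → ℝ := fun x => if x ∈ S then 1 else 0
  have hterm : ∀ x y, π x * P x y * ((if x ∈ B then 1 else 0) - if y ∈ B then 1 else 0) ^ 2
      ≤ π x * P x y * χS x + π x * P x y * χS y := by
    intro x y
    rw [← mul_add]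
    rcases eq_or_ne (P x y) 0 with hxy | hxy
    · simp [hxy]
    refine mul_le_mul_of_nonneg_left ?_ (mul_nonneg (hπ0 x) (hP0 x y))
    have := hS x y hxy
    simp only [χS]
    split_ifs <;> simp_all
  have hχS : ∑ x, π x * χS x = ∑ x ∈ S, π x := by simp [χS]
  have hleft : ∑ x, ∑ y, π x * P x y * χS x = ∑ x ∈ S, π x := by
    simp_rw [mul_right_comm _ (P _ _), ← mul_sum, hrow, mul_one, hχS]
  have hright : ∑ x, ∑ y, π x * P x y * χS y = ∑ x ∈ S, π x := by
    rw [sum_comm]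
    simp_rw [← sum_mul, sum_mul_eq_of_reversible hrow hrev, hχS]
  calc dirichletForm π P (fun x => if x ∈ B then 1 else 0)
      ≤ 1 / 2 * ∑ x, ∑ y, (π x * P x y * χS x + π x * P x y * χS y) :=
        mul_le_mul_of_nonneg_left (sum_le_sum fun x _ => sum_le_sum fun y _ => hterm x y)
          (by norm_num)
    _ = ∑ x ∈ S, π x := by simp only [sum_add_distrib, hleft, hright]; ring

lemma varPi_indicator (hπ1 : ∑ x, π x = 1) (B : Finset α) :
    varPi π (fun x => if x ∈ B then 1 else 0) = (∑ x ∈ B, π x) * (1 - ∑ x ∈ B, π x) := by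
  set p := ∑ x ∈ B, π x
  have hmean : ∑ x, π x * (if x ∈ B then 1 else 0) = p := by simp [p]
  have hsq : ∀ x, π x * ((if x ∈ B then 1 else 0) - p) ^ 2
      = (1 - 2 * p) * (π x * if x ∈ B then 1 else 0) + p ^ 2 * π x := by
    intro x
    split_ifs <;> ring
  simp only [varPi, hmean, hsq, sum_add_distrib, ← mul_sum, hπ1]
  ring

lemma dirichletForm_indicator_le_mul_varPi (hπ0 : ∀ x, 0 ≤ π x) (hπ1 : ∑ x, π x = 1)
    (hP0 : ∀ x y, 0 ≤ P x y) (hrow : ∀ x, ∑ y, P x y = 1)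
    (hrev : ∀ x y, π x * P x y = π y * P y x)
    {B S : Finset α} (hS : ∀ x y, P x y ≠ 0 → (x ∈ B ↔ y ∉ B) → x ∈ S ∨ y ∈ S)
    (hB : ∑ x ∈ B, π x ≤ 1 / 2) {κ : ℝ} (hSB : ∑ x ∈ S, π x ≤ κ * ∑ x ∈ B, π x) :
    dirichletForm π P (fun x => if x ∈ B then 1 else 0)
      ≤ 2 * κ * varPi π (fun x => if x ∈ B then 1 else 0) := by
  rw [varPi_indicator hπ1]
  have hS0 : 0 ≤ ∑ x ∈ S, π x := sum_nonneg fun x _ => hπ0 x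
  have hB0 : 0 ≤ ∑ x ∈ B, π x := sum_nonneg fun x _ => hπ0 x
  have := dirichletForm_indicator_le hπ0 hP0 hrow hrev hS
  nlinarith

lemma sum_le_half_of_disjoint_image (hπ0 : ∀ x, 0 ≤ π x) (hπ1 : ∑ x, π x = 1) {e : α → α}
    (he : Function.Injective e) (hπe : ∀ x, π (e x) = π x) {B : Finset α}
    (hB : Disjoint B (B.image e)) :
    ∑ x ∈ B, π x ≤ 1 / 2 := by
  have : ∑ x ∈ B, π x + ∑ x ∈ B, π x ≤ 1 :=
    calc ∑ x ∈ B, π x + ∑ x ∈ B, π x = ∑ x ∈ B ∪ B.image e, π x := by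
          rw [sum_union hB, sum_image he.injOn]
          simp only [hπe]
      _ ≤ 1 := hπ1 ▸ sum_le_univ_sum_of_nonneg hπ0
  linarith

end Bottleneck

section Spectral

open RealInnerProductSpace

theorem LinearMap.IsSymmetric.exists_eigenvector_of_le_inner {E : Type*}
    [NormedAddCommGroup E] [InnerProductSpace ℝ E] [FiniteDimensional ℝ E]
    {T : E →ₗ[ℝ] E} (hT : T.IsSymmetric) {h : E} (hh : h ≠ 0) {a : ℝ}
    (ha : a * ‖h‖ ^ 2 ≤ ⟪h, T h⟫) :
    ∃ v : E, ∃ l : ℝ, T v = l • v ∧ ⟪v, h⟫ ≠ 0 ∧ a ≤ l := by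
  set b := hT.eigenvectorBasis rfl
  set μ := hT.eigenvalues rfl
  have hnorm : ‖h‖ ^ 2 = ∑ i, ⟪b i, h⟫ ^ 2 := by
    rw [← real_inner_self_eq_norm_sq, ← b.sum_inner_mul_inner]
    simp only [real_inner_comm h, sq]
  have hquad : ⟪h, T h⟫ = ∑ i, μ i * ⟪b i, h⟫ ^ 2 := by
    rw [← b.sum_inner_mul_inner]
    refine sum_congr rfl fun i _ => ?_
    rw [← hT, hT.apply_eigenvectorBasis, real_inner_smul_left, real_inner_comm h]
    simp only [RCLike.ofReal_real_eq_id, id_eq, b, μ]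
    ring
  by_contra! hsmall
  obtain ⟨j, hj⟩ : ∃ j, ⟪b j, h⟫ ≠ 0 := by
    by_contra! hzero
    exact hh (by rw [← b.sum_repr' h]; simp [hzero])
  have hlt : ∑ i, μ i * ⟪b i, h⟫ ^ 2 < ∑ i, a * ⟪b i, h⟫ ^ 2 := by
    refine sum_lt_sum (fun i _ => ?_) ⟨j, mem_univ j, ?_⟩
    · rcases eq_or_ne ⟪b i, h⟫ 0 with hi | hi
      · simp [hi]
      · exact mul_le_mul_of_nonneg_right
          (hsmall _ _ (hT.apply_eigenvectorBasis rfl i) hi).le (sq_nonneg _)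
    · exact mul_lt_mul_of_pos_right (hsmall _ _ (hT.apply_eigenvectorBasis rfl j) hj)
        (sq_pos_of_ne_zero hj)
  rw [← mul_sum, ← hnorm, ← hquad] at hlt
  linarith

noncomputable def symmetrizedKernel {α : Type*} (π : α → ℝ) (P : α → α → ℝ) : Matrix α α ℝ :=
  Matrix.of fun x y => Real.sqrt (π x) * P x y / Real.sqrt (π y)

lemma isHermitian_symmetrizedKernel {α : Type*} {π : α → ℝ} {P : α → α → ℝ}
    (hπ : ∀ x, 0 < π x) (hrev : ∀ x y, π x * P x y = π y * P y x) :
    (symmetrizedKernel π P).IsHermitian := by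
  ext x y
  simp only [symmetrizedKernel, Matrix.conjTranspose_apply, Matrix.of_apply, star_trivial]
  rw [div_eq_div_iff (Real.sqrt_pos.2 (hπ x)).ne' (Real.sqrt_pos.2 (hπ y)).ne']
  linear_combination P y x * Real.mul_self_sqrt (hπ y).le
    - P x y * Real.mul_self_sqrt (hπ x).le + hrev y x

variable {α : Type*} [Fintype α] [DecidableEq α] {π : α → ℝ} {P : α → α → ℝ}

lemma exists_eigenfunction_of_le_sum (hπ : ∀ x, 0 < π x)
    (hrev : ∀ x y, π x * P x y = π y * P y x) {f : α → ℝ} (hf : f ≠ 0) {a : ℝ}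
    (ha : a * ∑ x, π x * f x ^ 2 ≤ ∑ x, ∑ y, π x * P x y * (f x * f y)) :
    ∃ g : α → ℝ, ∃ l : ℝ, (∀ x, ∑ y, P x y * g y = l * g x) ∧
      ∑ x, π x * g x * f x ≠ 0 ∧ a ≤ l := by
  set s : α → ℝ := fun x => Real.sqrt (π x)
  have hs : ∀ x, 0 < s x := fun x => Real.sqrt_pos.2 (hπ x)
  have hss : ∀ x, s x * s x = π x := fun x => Real.mul_self_sqrt (hπ x).le
  set T := Matrix.toEuclideanLin (symmetrizedKernel π P)
  have hsymm : T.IsSymmetric :=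
    Matrix.isSymmetric_toEuclideanLin_iff.2 (isHermitian_symmetrizedKernel hπ hrev)
  have hT : ∀ v : EuclideanSpace ℝ α, ∀ x, T v x = ∑ y, s x * P x y / s y * v y :=
    fun v x => rfl
  set h : EuclideanSpace ℝ α := WithLp.toLp 2 fun x => s x * f x
  have hinner : ∀ v : EuclideanSpace ℝ α, ⟪v, h⟫ = ∑ x, s x * v x * f x := fun v => by
    simp only [PiLp.inner_apply, h, RCLike.inner_apply, conj_trivial]
    exact sum_congr rfl fun x _ => by ring
  have hnorm : ‖h‖ ^ 2 = ∑ x, π x * f x ^ 2 := by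
    rw [← real_inner_self_eq_norm_sq, hinner]
    exact sum_congr rfl fun x _ => by simp only [h]; rw [← hss]; ring
  have hquad : ⟪h, T h⟫ = ∑ x, ∑ y, π x * P x y * (f x * f y) := by
    rw [real_inner_comm, hinner]
    simp only [hT, h, sum_mul, mul_sum]
    refine sum_congr rfl fun x _ => sum_congr rfl fun y _ => ?_
    field_simp [(hs y).ne']
    rw [← hss x]
    ring
  have hh : h ≠ 0 := by
    intro h0
    apply hf
    funext x
    have := congr_arg (fun v : EuclideanSpace ℝ α => v x) h0
    simpa [h, (hs x).ne'] using this
  obtain ⟨v, l, hv, hvh, hl⟩ := hsymm.exists_eigenvector_of_le_inner hh (by rwa [hnorm, hquad])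
  have heig : ∀ x, ∑ y, s x * P x y / s y * v y = l * v x := fun x => by
    rw [← hT, hv]
    rfl
  refine ⟨fun x => v x / s x, l, fun x => ?_, ?_, hl⟩
  · rw [mul_div_assoc', ← heig x, sum_div]
    refine sum_congr rfl fun y _ => ?_
    field_simp [(hs x).ne']
  · rw [hinner] at hvh
    convert hvh using 2 with x
    field_simp [(hs x).ne']
    rw [← hss x]
    ring

lemma exists_eigenfunction_of_dirichletForm_le (hπ : ∀ x, 0 < π x) (hπ1 : ∑ x, π x = 1)
    (hrow : ∀ x, ∑ y, P x y = 1) (hrev : ∀ x y, π x * P x y = π y * P y x)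
    {f : α → ℝ} (hf : varPi π f ≠ 0) {ε : ℝ} (hD : dirichletForm π P f ≤ ε * varPi π f) :
    ∃ g : α → ℝ, ∃ l : ℝ, (∀ x, ∑ y, P x y * g y = l * g x) ∧
      ∑ x, π x * g x = 0 ∧ g ≠ 0 ∧ 1 - ε ≤ l := by
  set f₀ : α → ℝ := fun x => f x - ∑ y, π y * f y
  have hvar : varPi π f = ∑ x, π x * f₀ x ^ 2 := rfl
  have hf₀ : f₀ ≠ 0 := fun h0 => hf (by simp [hvar, h0])
  have hmean₀ : ∑ x, π x * f₀ x = 0 := by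
    simp only [f₀, mul_sub, sum_sub_distrib, ← sum_mul, hπ1, one_mul, sub_self]
  have hquad : (1 - ε) * ∑ x, π x * f₀ x ^ 2 ≤ ∑ x, ∑ y, π x * P x y * (f₀ x * f₀ y) := by
    have := dirichletForm_eq hrow hrev f₀
    rw [dirichletForm_sub_const, ← hvar] at this
    rw [← hvar]
    linarith
  obtain ⟨g, l, hg, hgf, hl⟩ := exists_eigenfunction_of_le_sum hπ hrev hf₀ hquad
  set c := ∑ x, π x * g x
  have hc : l * c = c := by
    have hstat : ∑ x, π x * ∑ y, P x y * g y = c := by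
      simp only [mul_sum, ← mul_assoc]
      rw [sum_comm]
      simp_rw [← sum_mul, sum_mul_eq_of_reversible hrow hrev]
      rfl
    simpa only [hg, mul_left_comm _ l, ← mul_sum] using hstat
  refine ⟨fun x => g x - c, l, fun x => ?_, ?_, fun h0 => hgf ?_, hl⟩
  · simp only [mul_sub, sum_sub_distrib, ← sum_mul, hrow, hg]
    linarith
  · simp only [mul_sub, sum_sub_distrib, ← sum_mul, hπ1, c]
    ring
  · have hgc : ∀ x, g x = c := fun x => sub_eq_zero.1 (congr_fun h0 x)
    simp only [hgc, mul_right_comm _ c, ← sum_mul, hmean₀, zero_mul]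

end Spectral

section Mixing

variable {α : Type*} [Fintype α] {π : α → ℝ} {P : α → α → ℝ}

lemma abs_pow_le_half_of_tv_le {g : α → ℝ} {l : ℝ} (hg : ∀ x, ∑ y, P x y * g y = l * g x)
    (hmean : ∑ x, π x * g x = 0) (hg0 : g ≠ 0) {t : ℕ}
    (ht : ∀ x, 1 / 2 * ∑ y, |kernelPow P t x y - π y| ≤ 1 / 4) : |l| ^ t ≤ 1 / 2 := by
  obtain ⟨x₁, hx₁⟩ := Function.ne_iff.1 hg0
  obtain ⟨x, -, hmax⟩ := exists_max_image univ (fun x => |g x|) ⟨x₁, mem_univ x₁⟩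
  have hgx : 0 < |g x| := (abs_pos.2 hx₁).trans_le (hmax x₁ (mem_univ x₁))
  have hdiff : l ^ t * g x = ∑ y, (kernelPow P t x y - π y) * g y := by
    simp only [sub_mul, sum_sub_distrib, hmean, sub_zero, sum_kernelPow_mul_of_eigen hg]
  have hbound : |l| ^ t * |g x| ≤ 1 / 2 * |g x| :=
    calc |l| ^ t * |g x| = |∑ y, (kernelPow P t x y - π y) * g y| := by
          rw [← hdiff, abs_mul, abs_pow]
      _ ≤ ∑ y, |kernelPow P t x y - π y| * |g x| := by
          refine (abs_sum_le_sum_abs _ _).trans (sum_le_sum fun y _ => ?_)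
          rw [abs_mul]
          exact mul_le_mul_of_nonneg_left (hmax y (mem_univ y)) (abs_nonneg _)
      _ ≤ 1 / 2 * |g x| := by
          rw [← sum_mul]
          exact mul_le_mul_of_nonneg_right (by linarith [ht x]) hgx.le
  exact le_of_mul_le_mul_right hbound hgx

lemma log_two_mul_le_of_abs_pow_le_half {ε l : ℝ} (hε : 0 < ε) (hε1 : ε < 1)
    (hl : 1 - ε ≤ l) {t : ℕ} (ht : |l| ^ t ≤ 1 / 2) : Real.log 2 * ((1 - ε) / ε) ≤ t := by
  have hl0 : 0 < l := by linarith
  have hε1' : 0 < 1 - ε := by linarith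
  have hlog : Real.log 2 ≤ t * Real.log l⁻¹ := by
    have := Real.log_le_log (by positivity) ht
    rw [abs_of_pos hl0, Real.log_pow, one_div, Real.log_inv] at this
    rw [Real.log_inv]
    linarith
  have hlog_inv : Real.log l⁻¹ ≤ ε / (1 - ε) :=
    calc Real.log l⁻¹ ≤ l⁻¹ - 1 := Real.log_le_sub_one_of_pos (inv_pos.2 hl0)
      _ ≤ (1 - ε)⁻¹ - 1 := by gcongr
      _ = ε / (1 - ε) := by field_simp; ring
  calc Real.log 2 * ((1 - ε) / ε) ≤ t * (ε / (1 - ε)) * ((1 - ε) / ε) :=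
        mul_le_mul_of_nonneg_right (hlog.trans (by gcongr)) (div_nonneg hε1'.le hε.le)
    _ = t := by field_simp

lemma sum_abs_sum_mul_le {M : α → α → ℝ} {δ : ℝ} (hδ : ∀ x y, δ ≤ M x y)
    (hrow : ∀ x, ∑ y, M x y = 1) {u : α → ℝ} (hu : ∑ x, u x = 0) :
    ∑ y, |∑ x, u x * M x y| ≤ (1 - Fintype.card α * δ) * ∑ x, |u x| := by
  have hshift : ∀ y, ∑ x, u x * M x y = ∑ x, u x * (M x y - δ) := fun y => by
    simp only [mul_sub, sum_sub_distrib, ← sum_mul, hu, zero_mul, sub_zero]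
  have hrow' : ∀ x, ∑ y, (M x y - δ) = 1 - Fintype.card α * δ := fun x => by
    simp [sum_sub_distrib, hrow]
  calc ∑ y, |∑ x, u x * M x y| ≤ ∑ y, ∑ x, |u x| * (M x y - δ) := by
        refine sum_le_sum fun y _ => ?_
        rw [hshift]
        refine (abs_sum_le_sum_abs _ _).trans (sum_le_sum fun x _ => ?_)
        rw [abs_mul, abs_of_nonneg (sub_nonneg.2 (hδ x y))]
    _ = (1 - Fintype.card α * δ) * ∑ x, |u x| := by
        rw [sum_comm]
        simp_rw [← mul_sum, hrow', ← sum_mul, mul_comm]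

variable [Nonempty α]

lemma exists_tv_kernelPow_le (hπ0 : ∀ x, 0 ≤ π x) (hπ1 : ∑ x, π x = 1)
    (hrow : ∀ x, ∑ y, P x y = 1) (hrev : ∀ x y, π x * P x y = π y * P y x)
    {M : ℕ} (hM : ∀ x y, 0 < kernelPow P M x y) :
    ∃ t, ∀ x, 1 / 2 * ∑ y, |kernelPow P t x y - π y| ≤ 1 / 4 := by
  obtain ⟨p, hp⟩ := Finite.exists_min fun p : α × α => kernelPow P M p.1 p.2
  set δ := kernelPow P M p.1 p.2
  have hδ : ∀ x y, δ ≤ kernelPow P M x y := fun x y => hp (x, y)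
  set q := 1 - Fintype.card α * δ
  have hq0 : 0 ≤ q := by
    have := sum_le_sum fun y (_ : y ∈ univ) => hδ (Classical.arbitrary α) y
    simp only [sum_const, card_univ, nsmul_eq_mul, sum_kernelPow_eq_one hrow] at this
    linarith
  have hq1 : q < 1 := by
    have : 0 < (Fintype.card α : ℝ) * δ := mul_pos (by exact_mod_cast Fintype.card_pos) (hM _ _)
    linarith
  have hstep : ∀ t x, ∑ y, |kernelPow P (t + M) x y - π y|
      ≤ q * ∑ y, |kernelPow P t x y - π y| := by
    intro t x
    have hsplit : ∀ y, kernelPow P (t + M) x y - π y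
        = ∑ z, (kernelPow P t x z - π z) * kernelPow P M z y := fun y => by
      simp only [kernelPow_add, sub_mul, sum_sub_distrib,
        sum_mul_kernelPow (sum_mul_eq_of_reversible hrow hrev)]
    simp_rw [hsplit]
    exact sum_abs_sum_mul_le hδ (sum_kernelPow_eq_one hrow M)
      (by rw [sum_sub_distrib, sum_kernelPow_eq_one hrow, hπ1, sub_self])
  have hiter : ∀ s x, ∑ y, |kernelPow P (s * M) x y - π y| ≤ 2 * q ^ s := by
    intro s
    induction s with
    | zero =>
      intro x
      calc ∑ y, |kernelPow P (0 * M) x y - π y|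
          ≤ ∑ y, (kernelPow P 0 x y + π y) := by
            rw [zero_mul]
            refine sum_le_sum fun y _ => (abs_sub _ _).trans_eq ?_
            rw [abs_of_nonneg (hπ0 y)]
            simp only [kernelPow]
            split_ifs <;> simp
        _ = 2 * q ^ 0 := by
            rw [sum_add_distrib, sum_kernelPow_eq_one hrow, hπ1]
            norm_num
    | succ s ih =>
      intro x
      rw [add_one_mul]
      calc _ ≤ q * ∑ y, |kernelPow P (s * M) x y - π y| := hstep _ x
        _ ≤ q * (2 * q ^ s) := mul_le_mul_of_nonneg_left (ih x) hq0
        _ = 2 * q ^ (s + 1) := by ring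
  obtain ⟨s, hs⟩ := exists_pow_lt_of_lt_one (by norm_num : (0 : ℝ) < 1 / 4) hq1
  exact ⟨s * M, fun x => by linarith [hiter s x]⟩

lemma mixingTime_spec (hπ0 : ∀ x, 0 ≤ π x) (hπ1 : ∑ x, π x = 1)
    (hrow : ∀ x, ∑ y, P x y = 1) (hrev : ∀ x y, π x * P x y = π y * P y x)
    {M : ℕ} (hM : ∀ x y, 0 < kernelPow P M x y) (x : α) :
    1 / 2 * ∑ y, |kernelPow P (mixingTime π P) x y - π y| ≤ 1 / 4 :=
  Nat.sInf_mem (exists_tv_kernelPow_le hπ0 hπ1 hrow hrev hM) x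

theorem le_mixingTime_of_dirichletForm_le [DecidableEq α] (hπ : ∀ x, 0 < π x)
    (hπ1 : ∑ x, π x = 1) (hrow : ∀ x, ∑ y, P x y = 1)
    (hrev : ∀ x y, π x * P x y = π y * P y x) {M : ℕ} (hM : ∀ x y, 0 < kernelPow P M x y)
    {f : α → ℝ} (hf : varPi π f ≠ 0) {ε : ℝ} (hε : 0 < ε)
    (hD : dirichletForm π P f ≤ ε * varPi π f) :
    (ε⁻¹ - 1) * Real.log 2 ≤ mixingTime π P := by
  rcases le_or_gt 1 ε with hε1 | hε1
  · have : ε⁻¹ ≤ 1 := inv_le_one_of_one_le₀ hε1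
    exact (mul_nonpos_of_nonpos_of_nonneg (by linarith) (Real.log_nonneg one_le_two)).trans
      (Nat.cast_nonneg _)
  obtain ⟨g, l, hg, hmean, hg0, hl⟩ :=
    exists_eigenfunction_of_dirichletForm_le hπ hπ1 hrow hrev hf hD
  have := log_two_mul_le_of_abs_pow_le_half hε hε1 hl <| abs_pow_le_half_of_tv_le hg hmean hg0
    (mixingTime_spec (fun x => (hπ x).le) hπ1 hrow hrev hM)
  calc (ε⁻¹ - 1) * Real.log 2 = Real.log 2 * ((1 - ε) / ε) := by field_simp
    _ ≤ mixingTime π P := this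

end Mixing

section Hamming

variable {N : ℕ}

lemma hammingDist'_eq_hammingDist : @hammingDist' N = hammingDist := rfl

lemma bflip_apply_self (σ : Fin N → Bool) (i : Fin N) : bflip σ i i = !σ i := by
  simp [bflip]

lemma bflip_apply_of_ne (σ : Fin N → Bool) {i j : Fin N} (h : j ≠ i) : bflip σ i j = σ j :=
  Function.update_of_ne h _ _

lemma bflip_ne_self (σ : Fin N → Bool) (i : Fin N) : bflip σ i ≠ σ :=
  fun h => Bool.not_ne_self (σ i) (by simpa [bflip_apply_self] using congr_fun h i)

@[simp]
lemma bflip_bflip (σ : Fin N → Bool) (i : Fin N) : bflip (bflip σ i) i = σ := by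
  simp [bflip]

lemma bflip_injective (σ : Fin N → Bool) : Function.Injective (bflip σ) := by
  intro i j h
  by_contra hne
  have := congr_fun h i
  rw [bflip_apply_self, bflip_apply_of_ne σ hne] at this
  exact Bool.not_ne_self (σ i) this

lemma hammingDist_bflip_le (σ : Fin N → Bool) (i : Fin N) : hammingDist (bflip σ i) σ ≤ 1 := by
  refine (card_le_card fun j hj => ?_).trans (card_singleton i).le
  by_contra hji
  simp [bflip_apply_of_ne σ (mem_singleton.not.1 hji)] at hj

lemma hammingDist_bflip_add_one {σ τ : Fin N → Bool} {i : Fin N} (h : σ i ≠ τ i) :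
    hammingDist (bflip σ i) τ + 1 = hammingDist σ τ := by
  have hset : ({j | bflip σ i j ≠ τ j} : Finset (Fin N))
      = ({j | σ j ≠ τ j} : Finset (Fin N)).erase i := by
    ext j
    rcases eq_or_ne j i with rfl | hj
    · simp [bflip_apply_self, Bool.not_eq_eq_eq_not, h]
    · simp [bflip_apply_of_ne σ hj, hj]
  rw [hammingDist, hammingDist, hset, card_erase_add_one (by simpa using h)]

lemma hammingDist_not (σ : Fin N → Bool) : hammingDist σ (fun i => !σ i) = N := by
  simp [hammingDist]

def hammingBall (σstar : Fin N → Bool) (r : ℕ) : Finset (Fin N → Bool) :=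
  {σ | hammingDist σ σstar < r}

def hammingSphere (σstar : Fin N → Bool) (r : ℕ) : Finset (Fin N → Bool) :=
  {σ | hammingDist σ σstar = r}

@[simp]
lemma mem_hammingBall {σstar σ : Fin N → Bool} {r : ℕ} :
    σ ∈ hammingBall σstar r ↔ hammingDist σ σstar < r := by
  simp [hammingBall]

@[simp]
lemma mem_hammingSphere {σstar σ : Fin N → Bool} {r : ℕ} :
    σ ∈ hammingSphere σstar r ↔ hammingDist σ σstar = r := by
  simp [hammingSphere]

lemma hammingBall_disjoint_image_not (σstar : Fin N → Bool) {r : ℕ} (hrN : 2 * r ≤ N) :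
    Disjoint (hammingBall σstar r) ((hammingBall σstar r).image fun σ i => !σ i) := by
  refine disjoint_left.2 fun τ hτ hτ' => ?_
  obtain ⟨σ, hσ, rfl⟩ := mem_image.1 hτ'
  have := hammingDist_triangle σ σstar fun i => !σ i
  rw [hammingDist_not, hammingDist_comm σstar] at this
  simp only [mem_hammingBall] at hσ hτ
  omega

end Hamming

section Glauber

variable {N : ℕ} {μ : (Fin N → Bool) → ℝ}

lemma glauberP_bflip (σ : Fin N → Bool) (i : Fin N) :
    glauberP μ σ (bflip σ i) = 1 / N * (μ (bflip σ i) / (μ σ + μ (bflip σ i))) := by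
  rw [glauberP, if_neg (bflip_ne_self σ i).symm, if_pos ⟨i, rfl⟩]

lemma glauberP_of_ne {σ τ : Fin N → Bool} (h : σ ≠ τ) (hflip : ∀ i, τ ≠ bflip σ i) :
    glauberP μ σ τ = 0 := by
  rw [glauberP, if_neg h, if_neg (not_exists.2 hflip)]

lemma eq_or_exists_bflip_of_glauberP_ne_zero {σ τ : Fin N → Bool} (h : glauberP μ σ τ ≠ 0) :
    σ = τ ∨ ∃ i, τ = bflip σ i := by
  by_contra! hne
  exact h (glauberP_of_ne hne.1 hne.2)

lemma glauberP_bflip_pos (hμ : ∀ σ, 0 < μ σ) (σ : Fin N → Bool) (i : Fin N) :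
    0 < glauberP μ σ (bflip σ i) := by
  have : (0 : ℝ) < N := by exact_mod_cast i.pos
  rw [glauberP_bflip]
  have := hμ σ
  have := hμ (bflip σ i)
  positivity

lemma glauberP_self_pos (hμ : ∀ σ, 0 < μ σ) (σ : Fin N → Bool) : 0 < glauberP μ σ σ := by
  rw [glauberP, if_pos rfl, sub_pos]
  rcases Nat.eq_zero_or_pos N with rfl | hN
  · simp
  calc ∑ i : Fin N, 1 / (N : ℝ) * (μ (bflip σ i) / (μ σ + μ (bflip σ i)))
      < ∑ _i : Fin N, 1 / (N : ℝ) := by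
        refine sum_lt_sum_of_nonempty ⟨⟨0, hN⟩, mem_univ _⟩ fun i _ => ?_
        refine mul_lt_of_lt_one_right (by positivity) ?_
        rw [div_lt_one (add_pos (hμ σ) (hμ _))]
        linarith [hμ σ]
    _ = 1 := by simp [hN.ne']

lemma glauberP_nonneg (hμ : ∀ σ, 0 < μ σ) (σ τ : Fin N → Bool) : 0 ≤ glauberP μ σ τ := by
  rcases eq_or_ne σ τ with rfl | hne
  · exact (glauberP_self_pos hμ σ).le
  by_cases hflip : ∃ i, τ = bflip σ i
  · obtain ⟨i, rfl⟩ := hflip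
    exact (glauberP_bflip_pos hμ σ i).le
  · rw [glauberP_of_ne hne (not_exists.1 hflip)]

lemma sum_glauberP (σ : Fin N → Bool) : ∑ τ, glauberP μ σ τ = 1 := by
  have hoff : ∑ τ ∈ univ.erase σ, glauberP μ σ τ = ∑ i, glauberP μ σ (bflip σ i) := by
    rw [← sum_image fun i _ j _ h => bflip_injective σ h]
    refine (sum_subset (fun τ hτ => ?_) fun τ hτ hτ' => glauberP_of_ne ?_ ?_).symm
    · obtain ⟨i, -, rfl⟩ := mem_image.1 hτ
      exact mem_erase.2 ⟨bflip_ne_self σ i, mem_univ _⟩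
    · exact (ne_of_mem_erase hτ).symm
    · exact fun i hi => hτ' (mem_image.2 ⟨i, mem_univ i, hi.symm⟩)
  rw [← add_sum_erase _ _ (mem_univ σ), hoff]
  simp only [glauberP_bflip]
  rw [glauberP, if_pos rfl]
  ring

lemma glauberP_reversible (σ τ : Fin N → Bool) :
    μ σ * glauberP μ σ τ = μ τ * glauberP μ τ σ := by
  rcases eq_or_ne σ τ with rfl | hne
  · rfl
  by_cases hflip : ∃ i, τ = bflip σ i
  · obtain ⟨i, rfl⟩ := hflip
    have hback := glauberP_bflip (μ := μ) (bflip σ i) i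
    rw [bflip_bflip] at hback
    rw [glauberP_bflip, hback, add_comm (μ (bflip σ i))]
    ring
  · have hflip' : ∀ i, σ ≠ bflip τ i := fun i h => hflip ⟨i, by rw [h, bflip_bflip]⟩
    rw [glauberP_of_ne hne (not_exists.1 hflip), glauberP_of_ne hne.symm hflip', mul_zero,
      mul_zero]

lemma kernelPow_glauberP_pos (hμ : ∀ σ, 0 < μ σ) (n : ℕ) {σ τ : Fin N → Bool}
    (h : hammingDist σ τ ≤ n) : 0 < kernelPow (glauberP μ) n σ τ := by
  induction n generalizing σ with
  | zero => simp [kernelPow, hammingDist_eq_zero.1 (Nat.le_zero.1 h)]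
  | succ n ih =>
    have hterm : ∀ z, 0 ≤ glauberP μ σ z * kernelPow (glauberP μ) n z τ := fun z =>
      mul_nonneg (glauberP_nonneg hμ σ z) (kernelPow_nonneg (glauberP_nonneg hμ) n z τ)
    obtain ⟨z, hzP, hzd⟩ : ∃ z, 0 < glauberP μ σ z ∧ hammingDist z τ ≤ n := by
      rcases eq_or_ne σ τ with rfl | hne
      · exact ⟨σ, glauberP_self_pos hμ σ, by simp⟩
      obtain ⟨i, hi⟩ := Function.ne_iff.1 hne
      have := hammingDist_bflip_add_one hi
      exact ⟨bflip σ i, glauberP_bflip_pos hμ σ i, by omega⟩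
    rw [add_comm, kernelPow_add]
    simp only [kernelPow_one]
    exact (mul_pos hzP (ih hzd)).trans_le (single_le_sum (fun z _ => hterm z) (mem_univ z))

lemma glauberP_crossing_mem_hammingSphere (σstar : Fin N → Bool)
    (r : ℕ) (x y : Fin N → Bool) (hxy : glauberP μ x y ≠ 0)
    (hcross : x ∈ hammingBall σstar r ↔ y ∉ hammingBall σstar r) :
    x ∈ hammingSphere σstar r ∨ y ∈ hammingSphere σstar r := by
  rcases eq_or_exists_bflip_of_glauberP_ne_zero hxy with rfl | ⟨i, rfl⟩
  · exact (iff_not_self hcross).elim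
  have h₁ := hammingDist_triangle (bflip x i) x σstar
  have h₂ := hammingDist_triangle x (bflip x i) σstar
  have h₃ := hammingDist_bflip_le x i
  rw [hammingDist_comm x (bflip x i)] at h₂
  simp only [mem_hammingBall, mem_hammingSphere] at hcross ⊢
  omega

end Glauber

section Gibbs

variable {N : ℕ}

lemma gibbs_pos (β : ℝ) (H : (Fin N → Bool) → ℝ) (σ : Fin N → Bool) : 0 < gibbs β H σ :=
  div_pos (Real.exp_pos _) (sum_pos (fun _ _ => Real.exp_pos _) ⟨σ, mem_univ σ⟩)

lemma sum_gibbs (β : ℝ) (H : (Fin N → Bool) → ℝ) : ∑ σ, gibbs β H σ = 1 := by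
  simp only [gibbs, ← sum_div]
  exact div_self (sum_pos (fun _ _ => Real.exp_pos _) univ_nonempty).ne'

lemma gibbs_not {β : ℝ} {H : (Fin N → Bool) → ℝ} (heven : ∀ σ, H (fun i => !σ i) = H σ)
    (σ : Fin N → Bool) : gibbs β H (fun i => !σ i) = gibbs β H σ := by
  simp only [gibbs, heven]

lemma sum_gibbs_le_of_forall_le {β c Δ : ℝ} (hβ : 0 ≤ β) {H : (Fin N → Bool) → ℝ}
    {S : Finset (Fin N → Bool)} {σstar : Fin N → Bool}
    (hS : ∀ σ ∈ S, Δ ≤ H σstar - H σ) (hβΔ : (Real.log 2 + c) * N ≤ β * Δ) :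
    ∑ σ ∈ S, gibbs β H σ ≤ Real.exp (-c * N) * gibbs β H σstar := by
  have hpoint : ∀ σ ∈ S, gibbs β H σ ≤ Real.exp (-(β * Δ)) * gibbs β H σstar := by
    intro σ hσ
    rw [gibbs, gibbs, ← mul_div_assoc, ← Real.exp_add]
    gcongr
    nlinarith [hS σ hσ]
  have hcard : (S.card : ℝ) ≤ 2 ^ N := by
    exact_mod_cast (card_le_univ S).trans_eq (by simp)
  have h2N : (2 : ℝ) ^ N * Real.exp (-(β * Δ)) ≤ Real.exp (-c * N) := by
    rw [← Real.rpow_natCast, Real.rpow_def_of_pos two_pos, ← Real.exp_add]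
    gcongr
    linarith
  calc ∑ σ ∈ S, gibbs β H σ ≤ S.card * (Real.exp (-(β * Δ)) * gibbs β H σstar) := by
        simpa using sum_le_sum hpoint
    _ ≤ 2 ^ N * (Real.exp (-(β * Δ)) * gibbs β H σstar) := by
        gcongr
        exact (mul_pos (Real.exp_pos _) (gibbs_pos β H σstar)).le
    _ ≤ Real.exp (-c * N) * gibbs β H σstar := by
        rw [← mul_assoc]
        exact mul_le_mul_of_nonneg_right h2N (gibbs_pos β H σstar).le

lemma exists_dirichletForm_glauberP_le {β c Δ : ℝ} (hβ : 0 ≤ β) {H : (Fin N → Bool) → ℝ}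
    (heven : ∀ σ, H (fun i => !σ i) = H σ) (σstar : Fin N → Bool) {r : ℕ} (hr : 1 ≤ r)
    (hrN : 2 * r ≤ N) (hsphere : ∀ σ, hammingDist σ σstar = r → Δ ≤ H σstar - H σ)
    (hβΔ : (Real.log 2 + c) * N ≤ β * Δ) :
    ∃ f, varPi (gibbs β H) f ≠ 0 ∧ dirichletForm (gibbs β H) (glauberP (gibbs β H)) f
      ≤ 2 * Real.exp (-c * N) * varPi (gibbs β H) f := by
  set π := gibbs β H
  set B := hammingBall σstar r
  have hπ0 : ∀ σ, 0 ≤ π σ := fun σ => (gibbs_pos β H σ).le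
  have hB : ∑ σ ∈ B, π σ ≤ 1 / 2 :=
    sum_le_half_of_disjoint_image hπ0 (sum_gibbs β H)
      (fun σ τ h => funext fun i => by simpa using congr_fun h i) (gibbs_not heven)
      (hammingBall_disjoint_image_not σstar hrN)
  have hσstar : σstar ∈ B := mem_hammingBall.2 (by rw [hammingDist_self]; omega)
  have hBpos : 0 < ∑ σ ∈ B, π σ := sum_pos (fun σ _ => gibbs_pos β H σ) ⟨σstar, hσstar⟩
  have hSB : ∑ σ ∈ hammingSphere σstar r, π σ ≤ Real.exp (-c * N) * ∑ σ ∈ B, π σ :=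
    (sum_gibbs_le_of_forall_le hβ (fun σ hσ => hsphere σ (mem_hammingSphere.1 hσ)) hβΔ).trans
      (by gcongr; exact single_le_sum (fun σ _ => hπ0 σ) hσstar)
  refine ⟨fun σ => if σ ∈ B then 1 else 0, ?_, ?_⟩
  · rw [varPi_indicator (sum_gibbs β H)]
    nlinarith
  · exact dirichletForm_indicator_le_mul_varPi hπ0 (sum_gibbs β H)
      (glauberP_nonneg (gibbs_pos β H)) sum_glauberP glauberP_reversible
      (glauberP_crossing_mem_hammingSphere σstar r) hB hSB

end Gibbs

theorem stmt10_general {N : ℕ} (β c : ℝ) (hβ : 0 < β)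
    (H : (Fin N → Bool) → ℝ) (heven : ∀ σ, H (fun i => !σ i) = H σ)
    (σstar : Fin N → Bool) (ρ Δ : ℝ) (hρ' : ρ < 1/2) (hΔ : 0 < Δ)
    (hsphere : ∀ σ : Fin N → Bool,
      hammingDist' σ σstar = Nat.floor (ρ * N / 2) → H σstar - H σ ≥ Δ)
    (hβΔ : β * Δ ≥ (Real.log 2 + c) * N) :
    spectralGap (gibbs β H) (glauberP (gibbs β H)) ≤ 2 * Real.exp (-c * N) ∧
    (Real.exp (c * N) / 2 - 1) * Real.log 2
      ≤ (mixingTime (gibbs β H) (glauberP (gibbs β H)) : ℝ) := by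
  simp only [hammingDist'_eq_hammingDist, ge_iff_le] at hsphere
  set r := ⌊ρ * N / 2⌋₊
  have hr : 1 ≤ r := by
    by_contra! hr0
    have := hsphere σstar ((hammingDist_self σstar).trans (by omega))
    linarith
  have hrN : 2 * r ≤ N := by
    have h1 : (r : ℝ) ≤ ρ * N / 2 := Nat.floor_le (by linarith [Nat.floor_pos.1 hr])
    have : (2 * r : ℝ) ≤ N := by nlinarith [Nat.floor_pos.1 hr]
    exact_mod_cast this
  obtain ⟨f, hf, hD⟩ := exists_dirichletForm_glauberP_le hβ.le heven σstar hr hrN hsphere hβΔ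
  have hπ := gibbs_pos β H
  have hvar : 0 < varPi (gibbs β H) f :=
    (sum_nonneg fun σ _ => mul_nonneg (hπ σ).le (sq_nonneg _)).lt_of_ne' hf
  refine ⟨(spectralGap_le (fun σ => (hπ σ).le) (glauberP_nonneg hπ) hf).trans
    ((div_le_iff₀ hvar).2 hD), ?_⟩
  convert le_mixingTime_of_dirichletForm_le hπ (sum_gibbs β H) sum_glauberP glauberP_reversible
    (M := N) (fun σ τ => kernelPow_glauberP_pos hπ N
      (hammingDist_le_card_fintype.trans_eq (Fintype.card_fin N)))
    hf (by positivity) hD using 2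
  rw [mul_inv, neg_mul, Real.exp_neg, inv_inv]
  ring

theorem stmt10 {N : ℕ} (hN : 1 ≤ N) (β c : ℝ) (hβ : 0 < β) (hc : 0 < c)
    (H : (Fin N → Bool) → ℝ) (heven : ∀ σ, H (fun i => !σ i) = H σ)
    (σstar : Fin N → Bool) (ρ Δ : ℝ) (hρ : 0 < ρ) (hρ' : ρ < 1/2) (hΔ : 0 < Δ)
    (hsphere : ∀ σ : Fin N → Bool,
      hammingDist' σ σstar = Nat.floor (ρ * N / 2) → H σstar - H σ ≥ Δ)
    (hβΔ : β * Δ ≥ (Real.log 2 + c) * N) :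
    spectralGap (gibbs β H) (glauberP (gibbs β H)) ≤ 2 * Real.exp (-c * N) ∧
    (Real.exp (c * N) / 2 - 1) * Real.log 2
      ≤ (mixingTime (gibbs β H) (glauberP (gibbs β H)) : ℝ) :=
  stmt10_general β c hβ H heven σstar ρ Δ hρ' hΔ hsphere hβΔ
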